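/- arXiv:2304.11614 — 2 statements merged into one kernel-verified Lean document; each statement's English description precedes it below -/
import Mathlib

section
/- For every real y, the series ∑_{n=1}^∞ H̄_n·(e^y − ∑_{j=0}^n y^j/j!) converges and equals y·e^y·(Ein(2y) − Ein(y)) − cosh(y) + 1. -/
/-- n-th skew-harmonic number H̄_n = ∑_{k=1}^n (−1)^{k−1}/k. -/
noncomputable def skewHarm (n : ℕ) : ℝ := ∑ k ∈ Finset.range n, (-1) ^ k / ((k : ℝ) + 1)

/-- Complementary exponential integral Ein(z) = ∫_0^z (1 − e^{−t})/t dt. -/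
noncomputable def Ein (z : ℝ) : ℝ := ∫ t in (0:ℝ)..z, (1 - Real.exp (-t)) / t

/-!
Expanding each tail `e^y - ∑_{j ≤ n+1} y^j/j!` as `∑_i y^(n+i+2)/(n+i+2)!` turns the series into an
absolutely convergent double series. Summed along the diagonals `n + i = j` instead, the coefficient
of `y^(j+2)/(j+2)!` is `∑_{k ≤ j} H̄_{k+1} = (j+2) H̄_{j+1} - (1 + (-1)^j)/2`, so the series equals
`y ∑_m H̄_m y^m/m!` minus the even part of the exponential series beyond its constant term, which
is `cosh y - 1`. Finally `∑_m H̄_m y^m/m! = e^y (Ein(2y) - Ein(y))`: by the binomial identity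
`∑_k C(n,k) (-1)^k H̄_k = -(2^n - 1)/n`, its Cauchy product with the series of `e^(-y)` has the
coefficients `(-1)^(n+1) (2^n - 1) y^n/(n n!)` of the termwise integrated series of
`Ein(2y) - Ein(y)`.
-/

open Finset MeasureTheory Real
open scoped Nat

lemma hasSum_pow_div_factorial_exp (y : ℝ) : HasSum (fun n : ℕ => y ^ n / n !) (exp y) := by
  rw [exp_eq_exp_ℝ]
  exact NormedSpace.expSeries_div_hasSum_exp y

@[simp]
lemma skewHarm_zero : skewHarm 0 = 0 := rfl

lemma skewHarm_succ (n : ℕ) : skewHarm (n + 1) = skewHarm n + (-1) ^ n / (n + 1) :=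
  sum_range_succ _ n

lemma abs_skewHarm_le (n : ℕ) : |skewHarm n| ≤ n := by
  induction n with
  | zero => simp
  | succ n ih =>
    have hterm : |(-1 : ℝ) ^ n / (n + 1)| ≤ 1 := by
      rw [abs_div, abs_pow, abs_neg, abs_one, one_pow, abs_of_pos (by positivity)]
      exact div_le_one_of_le₀ (by linarith [n.cast_nonneg (α := ℝ)]) (by positivity)
    rw [skewHarm_succ]
    push_cast
    linarith [abs_add_le (skewHarm n) ((-1) ^ n / (n + 1))]

lemma abs_skewHarm_le_two_pow (n : ℕ) : |skewHarm n| ≤ 2 ^ n :=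
  (abs_skewHarm_le n).trans (mod_cast n.lt_two_pow_self.le)

lemma sum_range_skewHarm_succ (N : ℕ) :
    ∑ i ∈ range N, skewHarm (i + 1) = (N + 1) * skewHarm N - (1 - (-1) ^ N) / 2 := by
  induction N with
  | zero => simp
  | succ N ih =>
    rw [sum_range_succ, ih, skewHarm_succ]
    push_cast
    field_simp
    ring

lemma sum_range_choose_div_succ (n : ℕ) :
    ∑ k ∈ range (n + 1), (n.choose k : ℝ) / (k + 1) = (2 ^ (n + 1) - 1) / (n + 1) := by
  have hterm (k : ℕ) : (n.choose k : ℝ) / (k + 1) = ((n + 1).choose (k + 1) : ℝ) / (n + 1) := by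
    rw [div_eq_div_iff (by positivity) (by positivity), mul_comm]
    exact_mod_cast n.add_one_mul_choose_eq k
  have hsum : ∑ k ∈ range (n + 1), ((n + 1).choose (k + 1) : ℝ) = 2 ^ (n + 1) - 1 := by
    have h := (n + 1).sum_range_choose
    rw [sum_range_succ', Nat.choose_zero_right] at h
    rw [eq_sub_iff_add_eq]
    exact_mod_cast h
  simp_rw [hterm, ← sum_div, hsum]

lemma sum_range_choose_mul_neg_one_pow_mul_skewHarm (n : ℕ) :
    ∑ k ∈ range (n + 2), ((n + 1).choose k : ℝ) * (-1) ^ k * skewHarm k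
      = -(2 ^ (n + 1) - 1) / (n + 1) := by
  set g : ℕ → ℝ := fun k => (n.choose k : ℝ) * (-1) ^ k * skewHarm k
  -- Pascal's rule turns the sum into a telescoping sum plus `∑ C(n,k)/(k+1)`.
  have hpascal (k : ℕ) : ((n + 1).choose (k + 1) : ℝ) * (-1) ^ (k + 1) * skewHarm (k + 1)
      = (g (k + 1) - g k) - (n.choose k : ℝ) / (k + 1) := by
    have hsq : (-1 : ℝ) ^ k * (-1) ^ k = 1 := by rw [← pow_add, ← two_mul, pow_mul]; norm_num
    simp only [g, Nat.choose_succ_succ, Nat.cast_add, skewHarm_succ]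
    field_simp
    linear_combination (-(n.choose k : ℝ)) * hsq
  rw [sum_range_succ', sum_congr rfl fun k _ => hpascal k, sum_sub_distrib, sum_range_sub,
    sum_range_choose_div_succ]
  simp [g, Nat.choose_succ_self]
  ring

lemma hasSum_one_sub_exp_neg_div {t : ℝ} (ht : t ≠ 0) :
    HasSum (fun k : ℕ => (-1) ^ k * t ^ k / (k + 1)!) ((1 - exp (-t)) / t) := by
  have htail : HasSum (fun k : ℕ => (-t) ^ (k + 1) / (k + 1)!) (exp (-t) - 1) := by
    simpa using (hasSum_nat_add_iff' 1).mpr (hasSum_pow_div_factorial_exp (-t))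
  have h := htail.mul_left (-t⁻¹)
  rw [show -t⁻¹ * (exp (-t) - 1) = (1 - exp (-t)) / t by field_simp; ring] at h
  have hterm : (fun k : ℕ => -t⁻¹ * ((-t) ^ (k + 1) / (k + 1)!))
      = fun k : ℕ => (-1) ^ k * t ^ k / (k + 1)! := by
    ext k
    rw [neg_pow, pow_succ]
    field_simp
    ring
  rwa [hterm] at h

lemma hasSum_Ein (z : ℝ) :
    HasSum (fun k : ℕ => (-1) ^ k * z ^ (k + 1) / ((k + 1) * (k + 1)!)) (Ein z) := by
  have hint (k : ℕ) : ∫ t in (0 : ℝ)..z, (-1) ^ k * t ^ k / (k + 1)!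
      = (-1) ^ k * z ^ (k + 1) / ((k + 1) * (k + 1)!) := by
    simp_rw [mul_div_right_comm _ (_ ^ k)]
    rw [intervalIntegral.integral_const_mul, integral_pow]
    field_simp
    ring
  simp_rw [← hint]
  refine intervalIntegral.hasSum_integral_of_dominated_convergence (fun k _ => |z| ^ k / k !)
    (fun k => by fun_prop) (fun k => ae_of_all _ fun t ht => ?_)
    (ae_of_all _ fun _ _ => summable_pow_div_factorial |z|) intervalIntegrable_const ?_
  · have hle : |t| ≤ |z| := by
      simpa using Set.abs_sub_left_of_mem_uIcc (Set.uIoc_subset_uIcc ht)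
    rw [norm_div, norm_mul, norm_pow, norm_pow, norm_neg, norm_one, one_pow, one_mul,
      Real.norm_eq_abs, RCLike.norm_natCast]
    gcongr
    exact k.le_succ
  · filter_upwards [Measure.ae_ne volume 0] with t ht _
    exact hasSum_one_sub_exp_neg_div ht

lemma summable_norm_skewHarm_mul_pow_div_factorial (y : ℝ) :
    Summable fun m : ℕ => ‖skewHarm m * y ^ m / (m ! : ℝ)‖ := by
  refine (summable_pow_div_factorial (2 * |y|)).of_nonneg_of_le (fun _ => norm_nonneg _)
    fun m => ?_
  rw [norm_div, norm_mul, norm_pow, Real.norm_eq_abs, Real.norm_eq_abs, RCLike.norm_natCast,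
    mul_pow]
  gcongr
  exact abs_skewHarm_le_two_pow m

lemma skewHarm_mul_pow_div_factorial_mul_neg_pow_div_factorial (y : ℝ) {N k : ℕ} (hk : k ≤ N) :
    skewHarm k * y ^ k / k ! * ((-y) ^ (N - k) / (N - k)!)
      = (N.choose k : ℝ) * (-1) ^ k * skewHarm k * ((-1) ^ N * y ^ N / N !) := by
  have hfact : (N.choose k : ℝ) * k ! * (N - k)! = N ! := by
    exact_mod_cast Nat.choose_mul_factorial_mul_factorial hk
  have hsq : ((-1 : ℝ) ^ k) ^ 2 = 1 := by rw [pow_right_comm]; norm_num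
  have hchoose : (N.choose k : ℝ) ≠ 0 := mod_cast (Nat.choose_pos hk).ne'
  rw [← hfact, neg_pow, ← pow_mul_pow_sub y hk, ← pow_mul_pow_sub (-1 : ℝ) hk]
  field_simp
  rw [hsq, mul_one]

lemma sum_range_skewHarm_mul_pow_div_factorial_mul_neg_pow_div_factorial (y : ℝ) (n : ℕ) :
    ∑ k ∈ range (n + 2), skewHarm k * y ^ k / k ! * ((-y) ^ (n + 1 - k) / (n + 1 - k)!)
      = (-1) ^ n * (2 ^ (n + 1) - 1) * y ^ (n + 1) / ((n + 1) * (n + 1)!) := by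
  rw [sum_congr rfl fun k hk => skewHarm_mul_pow_div_factorial_mul_neg_pow_div_factorial y
    (Nat.lt_succ_iff.mp (mem_range.mp hk)), ← sum_mul,
    sum_range_choose_mul_neg_one_pow_mul_skewHarm]
  field_simp
  ring

lemma hasSum_Ein_two_mul_sub_Ein (y : ℝ) :
    HasSum (fun n : ℕ => (-1) ^ n * (2 ^ (n + 1) - 1) * y ^ (n + 1) / ((n + 1) * (n + 1)!))
      (Ein (2 * y) - Ein y) := by
  have hterm : (fun n : ℕ => (-1) ^ n * (2 * y) ^ (n + 1) / ((n + 1) * (n + 1)!)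
      - (-1) ^ n * y ^ (n + 1) / ((n + 1) * (n + 1)!))
      = fun n : ℕ => (-1) ^ n * (2 ^ (n + 1) - 1) * y ^ (n + 1) / ((n + 1) * (n + 1)!) := by
    ext n
    ring
  exact hterm ▸ (hasSum_Ein (2 * y)).sub (hasSum_Ein y)

lemma hasSum_skewHarm_mul_pow_div_factorial (y : ℝ) :
    HasSum (fun m : ℕ => skewHarm m * y ^ m / m !) (exp y * (Ein (2 * y) - Ein y)) := by
  have hG := summable_norm_skewHarm_mul_pow_div_factorial y
  have hE : Summable fun k : ℕ => ‖(-y) ^ k / (k ! : ℝ)‖ := by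
    simpa only [norm_div, norm_pow, norm_neg, Real.norm_eq_abs, RCLike.norm_natCast] using
      summable_pow_div_factorial |y|
  -- Cauchy product with the series of `exp (-y)`, shifted by one since its constant term vanishes.
  have hcauchy := hasSum_sum_range_mul_of_summable_norm hG hE
  have hprod := (hasSum_nat_add_iff' 1).mpr hcauchy
  simp only [add_assoc, Nat.reduceAdd, sum_range_one, skewHarm_zero, zero_mul, zero_div, sub_zero,
    sum_range_skewHarm_mul_pow_div_factorial_mul_neg_pow_div_factorial,
    (hasSum_pow_div_factorial_exp (-y)).tsum_eq] at hprod
  have hEin := hprod.unique (hasSum_Ein_two_mul_sub_Ein y)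
  rw [← hEin, mul_left_comm, ← exp_add, add_neg_cancel, exp_zero, mul_one]
  exact hG.of_norm.hasSum

lemma HasSum.sum_antidiagonal {α : Type*} [AddCommMonoid α] [TopologicalSpace α]
    [ContinuousAdd α] [RegularSpace α] {f : ℕ × ℕ → α} {a : α} (hf : HasSum f a) :
    HasSum (fun n => ∑ p ∈ antidiagonal n, f p) a :=
  ((Equiv.hasSum_iff HasAntidiagonal.sigmaAntidiagonalEquivProd).mpr hf).sigma
    fun n => (antidiagonal n).hasSum f

lemma summable_pow_div_factorial_add {x : ℝ} (hx : 0 ≤ x) :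
    Summable fun p : ℕ × ℕ => x ^ (p.1 + p.2) / (p.1 + p.2)! := by
  refine ((summable_pow_div_factorial x).mul_of_nonneg (summable_pow_div_factorial x)
    (fun _ => by positivity) fun _ => by positivity).of_nonneg_of_le (fun _ => by positivity)
    fun p => ?_
  rw [pow_add, div_mul_div_comm]
  gcongr
  exact_mod_cast Nat.le_of_dvd (Nat.factorial_pos _)
    (Nat.factorial_mul_factorial_dvd_factorial_add _ _)

noncomputable def skewHarmExpTailTerm (y : ℝ) (p : ℕ × ℕ) : ℝ :=
  skewHarm (p.1 + 1) * (y ^ (p.2 + (p.1 + 2)) / (p.2 + (p.1 + 2))!)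

lemma summable_skewHarmExpTailTerm (y : ℝ) : Summable (skewHarmExpTailTerm y) := by
  have hinj : Function.Injective fun p : ℕ × ℕ => (p.2, p.1 + 2) := by
    intro p q h
    simp only [Prod.mk.injEq] at h
    ext <;> omega
  refine Summable.of_norm_bounded
    ((summable_pow_div_factorial_add (x := 2 * |y|) (by positivity)).comp_injective hinj)
    fun p => ?_
  have hskew : |skewHarm (p.1 + 1)| ≤ 2 ^ (p.2 + (p.1 + 2)) :=
    (abs_skewHarm_le_two_pow _).trans (pow_le_pow_right₀ (by norm_num) (by omega))
  simp only [skewHarmExpTailTerm, Function.comp_apply, norm_mul, norm_div, norm_pow,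
    Real.norm_eq_abs, RCLike.norm_natCast, mul_pow, mul_div_assoc]
  gcongr

lemma hasSum_skewHarmExpTailTerm_row (y : ℝ) (n : ℕ) :
    HasSum (fun i => skewHarmExpTailTerm y (n, i))
      (skewHarm (n + 1) * (exp y - ∑ j ∈ range (n + 2), y ^ j / j !)) :=
  ((hasSum_nat_add_iff' (n + 2)).mpr (hasSum_pow_div_factorial_exp y)).mul_left _

lemma sum_antidiagonal_skewHarmExpTailTerm (y : ℝ) (j : ℕ) :
    ∑ p ∈ antidiagonal j, skewHarmExpTailTerm y p
      = y * (skewHarm (j + 1) * y ^ (j + 1) / (j + 1)!)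
        - (1 + (-1) ^ j) / 2 * (y ^ (j + 2) / (j + 2)!) := by
  rw [Nat.sum_antidiagonal_eq_sum_range_succ_mk]
  have hterm : ∀ k ∈ range (j + 1),
      skewHarmExpTailTerm y (k, j - k) = skewHarm (k + 1) * (y ^ (j + 2) / (j + 2)!) := by
    intro k hk
    rw [skewHarmExpTailTerm, show j - k + (k + 2) = j + 2 by have := mem_range.mp hk; omega]
  rw [sum_congr rfl hterm, ← sum_mul, sum_range_skewHarm_succ, Nat.factorial_succ (j + 1)]
  push_cast
  field_simp
  ring

lemma hasSum_cosh_sub_one (y : ℝ) :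
    HasSum (fun j : ℕ => (1 + (-1) ^ j) / 2 * (y ^ (j + 2) / (j + 2)!)) (cosh y - 1) := by
  have h := ((hasSum_pow_div_factorial_exp y).add (hasSum_pow_div_factorial_exp (-y))).div_const 2
  rw [← cosh_eq, ← hasSum_nat_add_iff' 2] at h
  have hterm : (fun j : ℕ => (y ^ (j + 2) / (j + 2)! + (-y) ^ (j + 2) / (j + 2)!) / 2)
      = fun j : ℕ => (1 + (-1) ^ j) / 2 * (y ^ (j + 2) / (j + 2)!) := by
    ext j
    rw [neg_pow]
    ring
  simpa [sum_range_succ, hterm] using h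

lemma hasSum_sum_antidiagonal_skewHarmExpTailTerm (y : ℝ) :
    HasSum (fun j => ∑ p ∈ antidiagonal j, skewHarmExpTailTerm y p)
      (y * exp y * (Ein (2 * y) - Ein y) - cosh y + 1) := by
  have hgen := (hasSum_nat_add_iff' 1).mpr (hasSum_skewHarm_mul_pow_div_factorial y)
  simp only [sum_range_one, skewHarm_zero, zero_mul, zero_div, sub_zero] at hgen
  have h := (hgen.mul_left y).sub (hasSum_cosh_sub_one y)
  simp_rw [← mul_assoc, ← sub_add, ← sum_antidiagonal_skewHarmExpTailTerm] at h
  exact h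

theorem stmt10 (y : ℝ) :
    HasSum (fun n : ℕ =>
        skewHarm (n + 1) *
          (Real.exp y - ∑ j ∈ Finset.range (n + 2), y ^ j / (Nat.factorial j : ℝ)))
      (y * Real.exp y * (Ein (2 * y) - Ein y) - Real.cosh y + 1) := by
  have hdouble := (summable_skewHarmExpTailTerm y).hasSum
  rw [← hdouble.sum_antidiagonal.unique (hasSum_sum_antidiagonal_skewHarmExpTailTerm y)]
  exact hdouble.prod_fiberwise (hasSum_skewHarmExpTailTerm_row y)
end

section
/- The series ∑_{n=1}^∞ (H_n − log(n) − γ − 1/(2n)) converges and equals (γ + 1 − log(2π))/2. -/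
/-!
The `N`-th partial sum equals `(N + 1/2)(H_N - log N - γ) + γ/2 + ((N + 1/2) log N - N - log N!)`.
The last bracket tends to `-log (2π) / 2` by Stirling's formula. For the first one,
`H_n - log n - 1/(2n)` increases and `H_n - log (n + 1/2)` decreases, both to `γ` (the trapezoid
rule overestimates and the midpoint rule underestimates `∫ dx/x`), which pins `H_N - log N - γ`
between `1/(2N+1)` and `1/(2N)`. The monotonicity of the first sequence also makes every term of
the series nonpositive, so the convergence of the partial sums is unconditional.
-/

/-- n-th harmonic number H_n = ∑_{k=1}^n 1/k. -/
noncomputable def harm (n : ℕ) : ℝ := ∑ k ∈ Finset.range n, 1 / ((k : ℝ) + 1)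

open Real Filter Topology

local notation "γ" => eulerMascheroniConstant

lemma harm_succ (n : ℕ) : harm (n + 1) = harm n + 1 / ((n : ℝ) + 1) :=
  Finset.sum_range_succ _ n

lemma harm_eq_harmonic (n : ℕ) : harm n = harmonic n := by
  simp [harm, harmonic, one_div]

lemma tendsto_harm_sub_log : Tendsto (fun n : ℕ => harm n - log n) atTop (𝓝 γ) := by
  simpa only [harm_eq_harmonic] using tendsto_harmonic_sub_log

lemma log_le_sub_inv_div_two {t : ℝ} (ht : 1 ≤ t) : log t ≤ (t - t⁻¹) / 2 := by
  rw [← sinh_log (by positivity)]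
  exact self_le_sinh_iff.mpr (log_nonneg ht)

lemma monotone_harm_sub_log_sub_inv :
    Monotone fun n : ℕ => harm (n + 1) - log ((n : ℝ) + 1) - 1 / (2 * ((n : ℝ) + 1)) := by
  refine monotone_nat_of_le_succ fun n => ?_
  set k : ℝ := n + 1
  have hk : 0 < k := by positivity
  have hlog := log_le_sub_inv_div_two (t := (k + 1) / k)
    (by rw [le_div_iff₀ hk]; linarith)
  have e : ((k + 1) / k - ((k + 1) / k)⁻¹) / 2 = 1 / (2 * k) + 1 / (2 * (k + 1)) := by
    field_simp; ring
  rw [e, log_div (by positivity) hk.ne'] at hlog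
  have e' : 1 / (k + 1) - 1 / (2 * (k + 1)) = 1 / (2 * (k + 1)) := by
    field_simp; ring
  simp only [harm_succ (n + 1), Nat.cast_add_one]
  linarith

lemma antitone_harm_sub_log_add_half :
    Antitone fun n : ℕ => harm n - log ((n : ℝ) + 1 / 2) := by
  refine antitone_nat_of_succ_le fun n => ?_
  have hlog := le_log_one_add_of_nonneg (x := 1 / ((n : ℝ) + 1 / 2)) (by positivity)
  have h1 : 1 + 1 / ((n : ℝ) + 1 / 2) = ((n : ℝ) + 1 + 1 / 2) / (n + 1 / 2) := by
    field_simp; ring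
  have h2 : 2 * (1 / ((n : ℝ) + 1 / 2)) / (1 / ((n : ℝ) + 1 / 2) + 2) = 1 / (n + 1) := by
    field_simp; ring
  rw [h1, h2, log_div (by positivity) (by positivity)] at hlog
  simp only [harm_succ, Nat.cast_add_one]
  linarith

lemma harm_succ_sub_log_sub_le_eulerMascheroniConstant (n : ℕ) :
    harm (n + 1) - log ((n : ℝ) + 1) - 1 / (2 * ((n : ℝ) + 1)) ≤ γ := by
  refine monotone_harm_sub_log_sub_inv.ge_of_tendsto ?_ n
  have hshift := tendsto_harm_sub_log.comp (tendsto_add_atTop_nat 1)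
  have hinv := (tendsto_const_div_atTop_nhds_zero_nat (1 / 2 : ℝ)).comp (tendsto_add_atTop_nat 1)
  convert hshift.sub hinv using 1
  · ext n
    simp only [Function.comp, Nat.cast_add_one]
    field_simp
  · simp

lemma eulerMascheroniConstant_le_harm_sub_log_add_half (n : ℕ) :
    γ ≤ harm n - log ((n : ℝ) + 1 / 2) := by
  refine antitone_harm_sub_log_add_half.le_of_tendsto ?_ n
  have hlog := (tendsto_log_comp_add_sub_log (1 / 2)).comp tendsto_natCast_atTop_atTop
  simpa using tendsto_harm_sub_log.sub hlog

lemma inv_two_mul_add_one_le_harm_sub_log_sub {k : ℕ} (hk : k ≠ 0) :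
    1 / (2 * (k : ℝ) + 1) ≤ harm k - log k - γ := by
  have hk : (0 : ℝ) < k := by positivity
  have hγ := eulerMascheroniConstant_le_harm_sub_log_add_half k
  have hlog := one_sub_inv_le_log_of_pos (x := ((k : ℝ) + 1 / 2) / k) (by positivity)
  rw [log_div (by positivity) hk.ne', inv_div] at hlog
  have e : 1 - (k : ℝ) / (k + 1 / 2) = 1 / (2 * k + 1) := by
    field_simp; ring
  linarith

lemma tendsto_mul_harm_sub_log_sub_eulerMascheroniConstant :
    Tendsto (fun k : ℕ => ((k : ℝ) + 1 / 2) * (harm k - log k - γ)) atTop (𝓝 (1 / 2)) := by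
  have hupper : Tendsto (fun k : ℕ => 1 / 2 + (1 / 4 : ℝ) / k) atTop (𝓝 (1 / 2)) := by
    have := (tendsto_const_div_atTop_nhds_zero_nat (1 / 4 : ℝ)).const_add (1 / 2)
    rwa [add_zero] at this
  refine tendsto_of_tendsto_of_tendsto_of_le_of_le' tendsto_const_nhds hupper ?_ ?_
  · filter_upwards [eventually_ne_atTop 0] with k hk
    calc (1 / 2 : ℝ) = ((k : ℝ) + 1 / 2) * (1 / (2 * k + 1)) := by field_simp
      _ ≤ _ := by gcongr; exact inv_two_mul_add_one_le_harm_sub_log_sub hk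
  · filter_upwards [eventually_ne_atTop 0] with k hk
    obtain ⟨n, rfl⟩ := Nat.exists_eq_succ_of_ne_zero hk
    have hγ := harm_succ_sub_log_sub_le_eulerMascheroniConstant n
    push_cast
    calc ((n : ℝ) + 1 + 1 / 2) * (harm (n + 1) - log ((n : ℝ) + 1) - γ)
        ≤ ((n : ℝ) + 1 + 1 / 2) * (1 / (2 * ((n : ℝ) + 1))) := by gcongr; linarith
      _ = 1 / 2 + 1 / 4 / ((n : ℝ) + 1) := by field_simp; ring

lemma tendsto_mul_log_sub_sub_log_factorial :
    Tendsto (fun n : ℕ => ((n : ℝ) + 1 / 2) * log n - n - log (n.factorial : ℝ)) atTop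
      (𝓝 (-log (2 * π) / 2)) := by
  have hlim := ((Stirling.tendsto_stirlingSeq_sqrt_pi.log (by positivity)).neg).sub_const
    (log 2 / 2)
  have e : -log √π - log 2 / 2 = -log (2 * π) / 2 := by
    rw [log_sqrt pi_pos.le, log_mul two_ne_zero pi_ne_zero]
    ring
  rw [e] at hlim
  refine hlim.congr' ?_
  filter_upwards [eventually_ne_atTop 0] with n hn
  have hn : (n : ℝ) ≠ 0 := Nat.cast_ne_zero.mpr hn
  rw [Stirling.log_stirlingSeq_formula, log_mul two_ne_zero hn, log_div hn (exp_ne_zero 1),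
    log_exp]
  ring

lemma sum_range_harm_succ_sub_log_sub (c : ℝ) (N : ℕ) :
    ∑ n ∈ Finset.range N, (harm (n + 1) - log ((n : ℝ) + 1) - c - 1 / (2 * ((n : ℝ) + 1)))
      = ((N : ℝ) + 1 / 2) * harm N - N - log (N.factorial : ℝ) - N * c := by
  induction N with
  | zero => simp [harm]
  | succ N ih =>
    rw [Finset.sum_range_succ, ih, Nat.factorial_succ, Nat.cast_mul,
      log_mul (by positivity) (by positivity), harm_succ]
    push_cast
    field_simp
    ring

theorem stmt17 :
    HasSum (fun n : ℕ =>
        harm (n + 1) - Real.log ((n : ℝ) + 1) - Real.eulerMascheroniConstant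
          - 1 / (2 * ((n : ℝ) + 1)))
      ((Real.eulerMascheroniConstant + 1 - Real.log (2 * Real.pi)) / 2) := by
  have hnonpos (n : ℕ) :
      harm (n + 1) - log ((n : ℝ) + 1) - γ - 1 / (2 * ((n : ℝ) + 1)) ≤ 0 := by
    linarith [harm_succ_sub_log_sub_le_eulerMascheroniConstant n]
  have hpartial : Tendsto (fun N : ℕ => ∑ n ∈ Finset.range N,
      (harm (n + 1) - log ((n : ℝ) + 1) - γ - 1 / (2 * ((n : ℝ) + 1)))) atTop
      (𝓝 ((γ + 1 - log (2 * π)) / 2)) := by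
    have hlim := (tendsto_mul_harm_sub_log_sub_eulerMascheroniConstant.add_const (γ / 2)).add
      tendsto_mul_log_sub_sub_log_factorial
    convert hlim using 2
    · rw [sum_range_harm_succ_sub_log_sub]
      ring
    · ring
  have hneg := (hasSum_iff_tendsto_nat_of_nonneg (fun n => neg_nonneg.mpr (hnonpos n)) _).mpr
    (by simpa only [Finset.sum_neg_distrib] using hpartial.neg)
  simpa only [neg_neg] using hneg.neg
end
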